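/- arXiv:2407.20877 — 5 statements merged into one kernel-verified Lean document; each statement's English description precedes it below -/
import Mathlib

section
/- Let k be an algebraically closed field and A a finite-dimensional associative unital k-algebra. For every nonzero finite-dimensional left A-module X there exists a brick B (i.e. a module with End_A(B) ≅ k) which is simultaneously a quotient module of X and a submodule of X; concretely, one may take B to be the image of a nonzero endomorphism of X whose image has minimal k-dimension among images of nonzero endomorphisms of X. -/
universe u v

open Module

/-- A finite-dimensional left module over the `k`-algebra `A`. -/
structure FDMod (k A : Type u) [Field k] [Ring A] [Algebra k A] : Type (u + 1) where
  carrier : Type u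
  [addCommGroup : AddCommGroup carrier]
  [moduleK : Module k carrier]
  [moduleA : Module A carrier]
  [tower : IsScalarTower k A carrier]
  [fd : FiniteDimensional k carrier]

attribute [instance] FDMod.addCommGroup FDMod.moduleK FDMod.moduleA FDMod.tower FDMod.fd

variable {k A : Type u} [Field k] [Ring A] [Algebra k A]

/-- `M` is a brick: `M ≠ 0` and every `A`-endomorphism of `M` is a `k`-scalar,
i.e. `End_A(M) ≅ k`. -/
def FDMod.IsBrick (M : FDMod k A) : Prop :=
  Nontrivial M.carrier ∧ ∀ f : M.carrier →ₗ[A] M.carrier, ∃ c : k, ∀ x : M.carrier, f x = c • x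

/-- `M` and `N` are Hom-orthogonal: `Hom_A(M,N) = 0` and `Hom_A(N,M) = 0`. -/
def FDMod.HomOrth (M N : FDMod k A) : Prop :=
  (∀ f : M.carrier →ₗ[A] N.carrier, f = 0) ∧ (∀ f : N.carrier →ₗ[A] M.carrier, f = 0)

/-- `M` and `N` are isomorphic as `A`-modules. -/
def FDMod.Iso (M N : FDMod k A) : Prop :=
  Nonempty (M.carrier ≃ₗ[A] N.carrier)

/-- A family of modules forms a Hom-orthogonal set: the modules are nonzero,
pairwise non-isomorphic and pairwise Hom-orthogonal. -/
def HomOrthFamily {I : Type v} (X : I → FDMod k A) : Prop :=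
  (∀ i, Nontrivial (X i).carrier) ∧
  (∀ i j, i ≠ j → ¬(X i).Iso (X j)) ∧
  (∀ i j, i ≠ j → (X i).HomOrth (X j))

/-- `A` is brick-finite: there are only finitely many isomorphism classes of bricks. -/
def BrickFinite (k A : Type u) [Field k] [Ring A] [Algebra k A] : Prop :=
  ∃ (m : ℕ) (f : Fin m → FDMod k A), ∀ N : FDMod k A, N.IsBrick → ∃ i, N.Iso (f i)

/-- `A` has rank `n`: there are exactly `n` isomorphism classes of simple modules. -/
def HasRank (k A : Type u) [Field k] [Ring A] [Algebra k A] (n : ℕ) : Prop :=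
  ∃ S : Fin n → FDMod k A,
    (∀ i, IsSimpleModule A (S i).carrier) ∧
    (∀ i j, i ≠ j → ¬(S i).Iso (S j)) ∧
    (∀ T : FDMod k A, IsSimpleModule A T.carrier → ∃ i, T.Iso (S i))

/-!
Take a nonzero endomorphism `f` of `X` whose image `B` has least dimension. If `g` is a nonzero
endomorphism of `B`, then `X ↠ B →g B ↪ X` is a nonzero endomorphism of `X` with image of
dimension at most `dim (im g)`, so by minimality `g` is surjective, hence bijective. Over an
algebraically closed field, `g - c` is not injective for an eigenvalue `c` of `g`, so `g = c`.
-/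

open LinearMap

section
variable {k A M : Type*} [Field k] [Ring A] [Algebra k A] [AddCommGroup M] [Module k M]
  [Module A M] [IsScalarTower k A M]

instance Submodule.finiteDimensional_of_isScalarTower [FiniteDimensional k M] (p : Submodule A M) :
    FiniteDimensional k p :=
  inferInstanceAs (FiniteDimensional k (p.restrictScalars k))

variable (k) in
theorem exists_ne_zero_finrank_range_minimal [Nontrivial M] :
    ∃ f : M →ₗ[A] M, f ≠ 0 ∧ ∀ g : M →ₗ[A] M, g ≠ 0 →
      finrank k (range (f.restrictScalars k)) ≤ finrank k (range (g.restrictScalars k)) := by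
  obtain ⟨f, hf, hmin⟩ := exists_minimalFor_of_wellFoundedLT (fun g : M →ₗ[A] M ↦ g ≠ 0)
    (fun g ↦ finrank k (range (g.restrictScalars k))) ⟨id, fun h ↦ one_ne_zero (α := End A M) h⟩
  exact ⟨f, hf, fun g hg ↦ (le_total _ _).elim (hmin hg) id⟩

theorem bijective_of_ne_zero_of_finrank_range_minimal [FiniteDimensional k M] {f : M →ₗ[A] M}
    (hmin : ∀ g : M →ₗ[A] M, g ≠ 0 →
      finrank k (range (f.restrictScalars k)) ≤ finrank k (range (g.restrictScalars k)))
    {g : range f →ₗ[A] range f} (hg : g ≠ 0) : Function.Bijective g := by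
  set h := (range f).subtype ∘ₗ g ∘ₗ f.rangeRestrict
  have hh : h ≠ 0 := by
    intro h0
    apply hg
    ext ⟨_, x, rfl⟩
    exact congr($h0 x)
  have hrange : range (h.restrictScalars k) =
      (range (g.restrictScalars k)).map ((range f).subtype.restrictScalars k) := by
    change range ((range f).subtype.restrictScalars k ∘ₗ g.restrictScalars k ∘ₗ
      f.rangeRestrict.restrictScalars k) = _
    rw [range_comp, range_comp_of_range_eq_top _
      (show range (f.rangeRestrict.restrictScalars k) = ⊤ from
        range_eq_top.mpr f.surjective_rangeRestrict)]
  have : finrank k (range f) ≤ finrank k (range (g.restrictScalars k)) :=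
    (hmin h hh).trans (hrange ▸ Submodule.finrank_map_le _ _)
  have hsurj : Function.Surjective (g.restrictScalars k) := by
    rw [← range_eq_top]
    exact Submodule.eq_top_of_finrank_eq (le_antisymm (Submodule.finrank_le _) this)
  exact ⟨injective_iff_surjective.mpr hsurj, hsurj⟩

theorem exists_eq_smul_of_forall_injective [IsAlgClosed k] [FiniteDimensional k M] [Nontrivial M]
    (hinj : ∀ g : M →ₗ[A] M, g ≠ 0 → Function.Injective g) (g : M →ₗ[A] M) :
    ∃ c : k, ∀ x, g x = c • x := by
  have : SMulCommClass k A M := IsScalarTower.to_smulCommClass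
  obtain ⟨c, hc⟩ := Module.End.exists_eigenvalue (g.restrictScalars k)
  obtain ⟨x, hx⟩ := hc.exists_hasEigenvector
  have hzero : g - c • 1 = 0 := by
    by_contra hne
    exact hx.2 (hinj _ hne (by simpa [sub_eq_zero] using hx.apply_eq_smul))
  exact ⟨c, fun y ↦ by simpa [sub_eq_zero] using congr($hzero y)⟩
end

theorem stmt0_general {k A : Type u} [Field k] [IsAlgClosed k] [Ring A] [Algebra k A]
    (X : FDMod k A) (hX : Nontrivial X.carrier) :
    ∃ (B : FDMod k A) (f : X.carrier →ₗ[A] X.carrier)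
      (π : X.carrier →ₗ[A] B.carrier) (ι : B.carrier →ₗ[A] X.carrier),
      B.IsBrick ∧
      -- `f` is a nonzero endomorphism of `X`
      f ≠ 0 ∧
      -- whose image has minimal dimension among images of nonzero endomorphisms
      (∀ g : X.carrier →ₗ[A] X.carrier, g ≠ 0 →
        finrank k (LinearMap.range (f.restrictScalars k)) ≤
          finrank k (LinearMap.range (g.restrictScalars k))) ∧
      -- and `B` is the image of `f`: `f` factors as a surjection onto `B`
      -- followed by an injection back into `X`; in particular `B` is both a
      -- quotient module and a submodule of `X`
      Function.Surjective π ∧ Function.Injective ι ∧ ι ∘ₗ π = f := by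
  obtain ⟨f, hf, hmin⟩ := exists_ne_zero_finrank_range_minimal k (M := X.carrier) (A := A)
  have : Nontrivial (range f) := Submodule.nontrivial_iff_ne_bot.mpr (range_eq_bot.not.mpr hf)
  have hbrick : FDMod.IsBrick (k := k) ⟨range f⟩ :=
    ⟨this, exists_eq_smul_of_forall_injective fun _ hg ↦
      (bijective_of_ne_zero_of_finrank_range_minimal hmin hg).1⟩
  exact ⟨⟨range f⟩, f, f.rangeRestrict, (range f).subtype, hbrick, hf, hmin,
    f.surjective_rangeRestrict, Subtype.val_injective, rfl⟩

/-- Over an algebraically closed field `k` and a finite-dimensional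
`k`-algebra `A`, every nonzero finite-dimensional `A`-module `X` has a brick `B`
which is simultaneously a quotient and a submodule of `X`; concretely, `B` is the
image of a nonzero endomorphism of `X` whose image has minimal `k`-dimension among
the images of nonzero endomorphisms of `X`. -/
theorem stmt0 {k A : Type u} [Field k] [IsAlgClosed k] [Ring A] [Algebra k A]
    [FiniteDimensional k A] (X : FDMod k A) (hX : Nontrivial X.carrier) :
    ∃ (B : FDMod k A) (f : X.carrier →ₗ[A] X.carrier)
      (π : X.carrier →ₗ[A] B.carrier) (ι : B.carrier →ₗ[A] X.carrier),
      B.IsBrick ∧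
      -- `f` is a nonzero endomorphism of `X`
      f ≠ 0 ∧
      -- whose image has minimal dimension among images of nonzero endomorphisms
      (∀ g : X.carrier →ₗ[A] X.carrier, g ≠ 0 →
        finrank k (LinearMap.range (f.restrictScalars k)) ≤
          finrank k (LinearMap.range (g.restrictScalars k))) ∧
      -- and `B` is the image of `f`: `f` factors as a surjection onto `B`
      -- followed by an injection back into `X`; in particular `B` is both a
      -- quotient module and a submodule of `X`
      Function.Surjective π ∧ Function.Injective ι ∧ ι ∘ₗ π = f :=
  stmt0_general X hX
end

section
/- Let {X_i}_{i∈I} be a Hom-orthogonal set of finite-dimensional left A-modules over a finite-dimensional algebra A over an algebraically closed field k. Then there exists a Hom-orthogonal set of bricks {B_i}_{i∈I}, indexed by the same set I, such that for each i ∈ I the brick B_i is both a submodule of X_i and a quotient module of X_i. -/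
universe u v

open Module

variable {k A : Type u} [Field k] [Ring A] [Algebra k A]

lemma exists_brick_data [IsAlgClosed k] (M : FDMod k A) (hM : Nontrivial M.carrier) :
    ∃ (B : FDMod k A) (ι : B.carrier →ₗ[A] M.carrier) (π : M.carrier →ₗ[A] B.carrier),
      Function.Injective ι ∧ Function.Surjective π ∧ B.IsBrick := by
  classical
  have hex : ∃ n, ∃ f : M.carrier →ₗ[A] M.carrier, f ≠ 0 ∧
      finrank k (LinearMap.range (f.restrictScalars k)) = n := by
    refine ⟨_, LinearMap.id, ?_, rfl⟩
    intro h
    obtain ⟨x, hx⟩ := exists_ne (0 : M.carrier)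
    exact hx (by simpa using congrArg (fun g => g x) h)
  obtain ⟨f, hf0, hfr⟩ := Nat.find_spec hex
  have hmin : ∀ g : M.carrier →ₗ[A] M.carrier, g ≠ 0 →
      Nat.find hex ≤ finrank k (LinearMap.range (g.restrictScalars k)) :=
    fun g hg => Nat.find_min' hex ⟨g, hg, rfl⟩
  set P : Submodule A M.carrier := LinearMap.range f with hP
  haveI hfdP : FiniteDimensional k ↥P :=
    FiniteDimensional.of_injective ((P.subtype).restrictScalars k) P.injective_subtype
  haveI hntP : Nontrivial ↥P :=
    Submodule.nontrivial_iff_ne_bot.mpr (by simpa [hP, LinearMap.range_eq_bot] using hf0)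
  -- finrank of ambient P equals the minimal value
  have hPfr : finrank k ↥P = Nat.find hex := by
    have h1 := LinearMap.finrank_range_add_finrank_ker (f.restrictScalars k)
    have h2 := LinearMap.finrank_range_add_finrank_ker
      ((f.rangeRestrict).restrictScalars k)
    have hker : LinearMap.ker ((f.rangeRestrict).restrictScalars k)
        = LinearMap.ker (f.restrictScalars k) := by
      ext x
      simp [LinearMap.mem_ker, Subtype.ext_iff]
    have hrange : LinearMap.range ((f.rangeRestrict).restrictScalars k) = ⊤ :=
      LinearMap.range_eq_top.mpr fun y => (f.surjective_rangeRestrict y)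
    rw [hker, hrange, finrank_top, ← hP] at h2
    omega
  -- every non-injective endomorphism of P is zero
  have key : ∀ g : (↥P) →ₗ[A] ↥P, ¬ Function.Injective g → g = 0 := by
    intro g hginj
    by_contra hg
    -- build endomorphism of M
    set h : M.carrier →ₗ[A] M.carrier := P.subtype ∘ₗ (g ∘ₗ f.rangeRestrict) with hh
    have hh0 : h ≠ 0 := by
      intro h0
      apply hg
      ext x
      obtain ⟨y, hy⟩ := f.surjective_rangeRestrict x
      have := congrArg (fun t => t y) h0
      simp only [hh, LinearMap.comp_apply, LinearMap.zero_apply] at this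
      have : g (f.rangeRestrict y) = 0 := Subtype.ext_iff.mpr (by simpa using this)
      rw [hy] at this
      simp [this]
    have hle := hmin h hh0
    -- range of h restricted equals image of range g under subtype
    have hrg : LinearMap.range (h.restrictScalars k)
        = (LinearMap.range (g.restrictScalars k)).map ((P.subtype).restrictScalars k) := by
      ext x
      constructor
      · rintro ⟨y, rfl⟩
        exact ⟨g (f.rangeRestrict y), ⟨f.rangeRestrict y, rfl⟩, rfl⟩
      · rintro ⟨z, ⟨w, rfl⟩, rfl⟩
        obtain ⟨y, hy⟩ := f.surjective_rangeRestrict w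
        exact ⟨y, by simp [hh, hy]⟩
    have hfr2 : finrank k (LinearMap.range (h.restrictScalars k))
        = finrank k (LinearMap.range (g.restrictScalars k)) := by
      rw [hrg]
      exact (LinearEquiv.finrank_eq
        ((LinearMap.range (g.restrictScalars k)).equivMapOfInjective
          ((P.subtype).restrictScalars k) P.injective_subtype)).symm
    rw [hfr2] at hle
    have hle2 : finrank k (LinearMap.range (g.restrictScalars k)) ≤ finrank k ↥P :=
      Submodule.finrank_le _
    have heq : finrank k (LinearMap.range (g.restrictScalars k)) = finrank k ↥P := by omega
    have htop : LinearMap.range (g.restrictScalars k) = ⊤ :=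
      Submodule.eq_top_of_finrank_eq heq
    have hsurj : Function.Surjective (g.restrictScalars k) := LinearMap.range_eq_top.mp htop
    have hinj2 := LinearMap.injective_iff_surjective.mpr hsurj
    rw [LinearMap.coe_restrictScalars] at hinj2
    exact hginj hinj2
  refine ⟨FDMod.mk (k := k) (A := A) (carrier := ↥P) (fd := hfdP),
    P.subtype, f.rangeRestrict, P.injective_subtype, f.surjective_rangeRestrict,
    hntP, ?_⟩
  show ∀ g : ↥P →ₗ[A] ↥P, ∃ c : k, ∀ x : ↥P, g x = c • x
  intro g
  obtain ⟨c, hc⟩ := Module.End.exists_eigenvalue (K := k) (V := ↥P) (g.restrictScalars k)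
  obtain ⟨x, hx⟩ := hc.exists_hasEigenvector
  have hni : ¬ Function.Injective ⇑(g - c • (LinearMap.id : ↥P →ₗ[A] ↥P)) := by
    intro hinj
    apply hx.2
    have : (g - c • (LinearMap.id : ↥P →ₗ[A] ↥P)) x = 0 := by
      have := hx.apply_eq_smul
      simp only [LinearMap.restrictScalars_apply] at this
      simp [LinearMap.sub_apply, this]
    have := hinj (a₁ := x) (a₂ := 0) (by simpa using this)
    exact this
  have h0 := key _ hni
  refine ⟨c, fun y => ?_⟩
  have := congrArg (fun t => t y) h0
  simp only [LinearMap.sub_apply, LinearMap.smul_apply, LinearMap.id_apply,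
    LinearMap.zero_apply, sub_eq_zero] at this
  exact this

/-- If `{X i}` is a Hom-orthogonal set of finite-dimensional
`A`-modules, then there is a Hom-orthogonal set of bricks `{B i}`, indexed by the
same set, such that each `B i` is both a submodule and a quotient module of `X i`. -/
theorem stmt1 {k A : Type u} [Field k] [IsAlgClosed k] [Ring A] [Algebra k A]
    [FiniteDimensional k A] {I : Type v} (X : I → FDMod k A) (hX : HomOrthFamily X) :
    ∃ B : I → FDMod k A,
      -- `{B i}` is a Hom-orthogonal set of bricks
      HomOrthFamily B ∧ (∀ i, (B i).IsBrick) ∧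
      -- each `B i` is a submodule of `X i`
      (∀ i, ∃ ι : (B i).carrier →ₗ[A] (X i).carrier, Function.Injective ι) ∧
      -- each `B i` is a quotient module of `X i`
      (∀ i, ∃ π : (X i).carrier →ₗ[A] (B i).carrier, Function.Surjective π) := by
  classical
  obtain ⟨hnt, hniso, horth⟩ := hX
  choose B ι π hι hπ hbrick using fun i => exists_brick_data (X i) (hnt i)
  have horthB : ∀ i j, i ≠ j → (B i).HomOrth (B j) := by
    intro i j hij
    constructor
    · intro g
      have h0 := (horth i j hij).1 ((ι j).comp (g.comp (π i)))
      ext x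
      obtain ⟨y, rfl⟩ := hπ i x
      have h1 := congrArg (fun t => t y) h0
      simp only [LinearMap.comp_apply, LinearMap.zero_apply] at h1
      have h2 := hι j (h1.trans (map_zero (ι j)).symm)
      simpa using h2
    · intro g
      have h0 := (horth i j hij).2 ((ι i).comp (g.comp (π j)))
      ext x
      obtain ⟨y, rfl⟩ := hπ j x
      have h1 := congrArg (fun t => t y) h0
      simp only [LinearMap.comp_apply, LinearMap.zero_apply] at h1
      have h2 := hι i (h1.trans (map_zero (ι i)).symm)
      simpa using h2
  refine ⟨B, ⟨fun i => (hbrick i).1, ?_, horthB⟩, hbrick,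
    fun i => ⟨ι i, hι i⟩, fun i => ⟨π i, hπ i⟩⟩
  rintro i j hij ⟨e⟩
  haveI := (hbrick i).1
  obtain ⟨x, hx⟩ := exists_ne (0 : (B i).carrier)
  have h0 := congrArg (fun t => t x) ((horthB i j hij).1 e.toLinearMap)
  simp only [LinearMap.zero_apply, LinearEquiv.coe_coe] at h0
  exact hx (e.map_eq_zero_iff.mp h0)
end

section
/- Let A be a finite-dimensional algebra over an algebraically closed field. If A admits an infinite Hom-orthogonal set of modules all of k-dimension d', then there exists a positive integer d ≤ d' such that A admits an infinite semibrick consisting of bricks all of k-dimension d. -/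
universe u v

open Module

variable {k A : Type u} [Field k] [Ring A] [Algebra k A]

/-! Take the least `d` for which there is an infinite Hom-orthogonal family of modules of
dimension `d`. If infinitely many members `M` of it were not bricks, each would carry a
nonzero endomorphism that is not injective, namely `f - c` for a non-scalar `f` and an
eigenvalue `c` of `f` (here `k` is algebraically closed). Images of such endomorphisms of
Hom-orthogonal modules are again Hom-orthogonal and have dimension `< d`; by pigeonhole
infinitely many of them share a dimension, contradicting the minimality of `d`. -/

open Function

theorem FDMod.HomOrth.not_iso {M N : FDMod k A} [Nontrivial M.carrier] (h : M.HomOrth N) :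
    ¬ M.Iso N := by
  rintro ⟨e⟩
  have he : (e : M.carrier →ₗ[A] N.carrier) = 0 := h.1 _
  obtain ⟨x, hx⟩ := exists_ne (0 : M.carrier)
  exact hx (e.injective (by simpa using LinearMap.congr_fun he x))

theorem HomOrthFamily.of_homOrth {I : Type*} {X : I → FDMod k A}
    (hnt : ∀ i, Nontrivial (X i).carrier) (horth : ∀ i j, i ≠ j → (X i).HomOrth (X j)) :
    HomOrthFamily X :=
  ⟨hnt, fun i j hij => (horth i j hij).not_iso, horth⟩

theorem HomOrthFamily.comp {I J : Type*} {X : I → FDMod k A} (hX : HomOrthFamily X)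
    {f : J → I} (hf : Injective f) : HomOrthFamily (X ∘ f) :=
  .of_homOrth (fun j => hX.1 (f j)) fun _ _ hij => hX.2.2 _ _ (hf.ne hij)

namespace FDMod

variable (M : FDMod k A)

noncomputable def range (g : M.carrier →ₗ[A] M.carrier) : FDMod k A where
  carrier := LinearMap.range g
  fd := FiniteDimensional.of_injective ((LinearMap.range g).subtype.restrictScalars k)
    Subtype.val_injective

theorem nontrivial_range {g : M.carrier →ₗ[A] M.carrier} (hg : g ≠ 0) :
    Nontrivial (M.range g).carrier :=
  Submodule.nontrivial_iff_ne_bot.mpr (mt LinearMap.range_eq_bot.mp hg)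

theorem finrank_range_lt {g : M.carrier →ₗ[A] M.carrier} (hg : ¬ Injective g) :
    finrank k (M.range g).carrier < finrank k M.carrier := by
  have hrange : LinearMap.range (g.restrictScalars k) ≠ ⊤ := by
    rwa [Ne, LinearMap.range_eq_top, ← LinearMap.injective_iff_surjective]
  calc finrank k (M.range g).carrier
      = finrank k (LinearMap.range (g.restrictScalars k)) := by
        rw [LinearMap.range_restrictScalars]
        exact (((LinearMap.range g).restrictScalarsEquiv k).restrictScalars k).finrank_eq.symm
    _ < finrank k M.carrier := Submodule.finrank_lt hrange

theorem hom_range_eq_zero {M N : FDMod k A} (h : ∀ f : M.carrier →ₗ[A] N.carrier, f = 0)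
    (g₁ : M.carrier →ₗ[A] M.carrier) (g₂ : N.carrier →ₗ[A] N.carrier)
    (φ : (M.range g₁).carrier →ₗ[A] (N.range g₂).carrier) : φ = 0 := by
  have hz : (LinearMap.range g₂).subtype ∘ₗ φ ∘ₗ g₁.rangeRestrict = 0 := h _
  apply LinearMap.ext
  rintro ⟨_, x, rfl⟩
  exact Subtype.ext (LinearMap.congr_fun hz x)

theorem HomOrth.range {M N : FDMod k A} (h : M.HomOrth N)
    (g₁ : M.carrier →ₗ[A] M.carrier) (g₂ : N.carrier →ₗ[A] N.carrier) :
    (M.range g₁).HomOrth (N.range g₂) :=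
  ⟨hom_range_eq_zero h.1 g₁ g₂, hom_range_eq_zero h.2 g₂ g₁⟩

theorem exists_ne_zero_not_injective [IsAlgClosed k] [Nontrivial M.carrier]
    (hM : ¬ M.IsBrick) :
    ∃ g : M.carrier →ₗ[A] M.carrier, g ≠ 0 ∧ ¬ Injective g := by
  obtain ⟨f, hf⟩ : ∃ f : M.carrier →ₗ[A] M.carrier, ∀ c : k, ∃ x, f x ≠ c • x := by
    simpa [IsBrick, ‹Nontrivial M.carrier›] using hM
  obtain ⟨c, hc⟩ := Module.End.exists_eigenvalue (f.restrictScalars k)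
  obtain ⟨v, hv⟩ := hc.exists_hasEigenvector
  refine ⟨f - c • LinearMap.id, fun h0 => ?_, fun hinj => hv.2 (hinj ?_)⟩
  · obtain ⟨x, hx⟩ := hf c
    exact hx (sub_eq_zero.mp (LinearMap.congr_fun h0 x))
  · simpa [sub_eq_zero] using hv.apply_eq_smul

end FDMod

def HasHomOrthSeq (k A : Type u) [Field k] [Ring A] [Algebra k A] (d : ℕ) : Prop :=
  ∃ B : ℕ → FDMod k A, HomOrthFamily B ∧ ∀ n, finrank k (B n).carrier = d

namespace HomOrthFamily

variable {I : Type*} {X : I → FDMod k A} {d : ℕ}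

theorem hasHomOrthSeq [Infinite I] (hX : HomOrthFamily X)
    (hdim : ∀ i, finrank k (X i).carrier = d) : HasHomOrthSeq k A d :=
  ⟨X ∘ Infinite.natEmbedding I, hX.comp (Infinite.natEmbedding I).injective, fun _ => hdim _⟩

theorem exists_hasHomOrthSeq_lt [IsAlgClosed k] (hX : HomOrthFamily X)
    (hdim : ∀ i, finrank k (X i).carrier = d) (hinf : {i | ¬ (X i).IsBrick}.Infinite) :
    ∃ e < d, HasHomOrthSeq k A e := by
  have := hinf.to_subtype
  have hnt (i : I) : Nontrivial (X i).carrier := hX.1 i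
  choose g hg0 hginj using fun i : {i | ¬ (X i).IsBrick} => (X i).exists_ne_zero_not_injective i.2
  let Y (i : {i | ¬ (X i).IsBrick}) : FDMod k A := (X i).range (g i)
  have hY : HomOrthFamily Y := .of_homOrth (fun i => (X i).nontrivial_range (hg0 i))
    fun i j hij => (hX.2.2 i j (Subtype.val_injective.ne hij)).range _ _
  have hlt (i) : finrank k (Y i).carrier < d := hdim i ▸ (X i).finrank_range_lt (hginj i)
  let dim (i : {i | ¬ (X i).IsBrick}) : Fin d := ⟨_, hlt i⟩
  obtain ⟨e, he⟩ := Finite.exists_infinite_fiber dim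
  have hfiber (i : dim ⁻¹' {e}) : finrank k (Y i).carrier = e := congrArg Fin.val i.2
  exact ⟨e, e.2, (hY.comp Subtype.val_injective).hasHomOrthSeq hfiber⟩

end HomOrthFamily

theorem stmt5_general {k A : Type u} [Field k] [IsAlgClosed k] [Ring A] [Algebra k A]
    (d' : ℕ) {I : Type v} [Infinite I]
    (X : I → FDMod k A) (hX : HomOrthFamily X)
    (hdim : ∀ i, finrank k (X i).carrier = d') :
    ∃ d : ℕ, 0 < d ∧ d ≤ d' ∧
      ∃ (J : Type u) (B : J → FDMod k A), Infinite J ∧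
        HomOrthFamily B ∧ (∀ j, (B j).IsBrick) ∧
        (∀ j, finrank k (B j).carrier = d) := by
  classical
  have hd' : HasHomOrthSeq k A d' := hX.hasHomOrthSeq hdim
  obtain ⟨B, hB, hBdim⟩ := Nat.find_spec ⟨d', hd'⟩
  have hbricks : {n | (B n).IsBrick}.Infinite := by
    have hfin : {n | ¬ (B n).IsBrick}.Finite := by
      by_contra hinf
      obtain ⟨e, he, hseq⟩ := hB.exists_hasHomOrthSeq_lt hBdim hinf
      exact Nat.find_min _ he hseq
    simpa only [Set.compl_ofPred, not_not] using hfin.infinite_compl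
  have := hbricks.to_subtype
  have hB0 : Nontrivial (B 0).carrier := hB.1 0
  refine ⟨_, hBdim 0 ▸ finrank_pos, Nat.find_min' _ hd', ULift {n | (B n).IsBrick},
    fun j => B j.down, inferInstance, ?_, fun j => j.down.2, fun _ => hBdim _⟩
  exact hB.comp (Subtype.val_injective.comp ULift.down_injective)

/-- If `A` admits an infinite Hom-orthogonal set of modules all of
`k`-dimension `d'`, then there is a positive integer `d ≤ d'` such that `A` admits
an infinite semibrick consisting of bricks all of `k`-dimension `d`. -/
theorem stmt5 {k A : Type u} [Field k] [IsAlgClosed k] [Ring A] [Algebra k A]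
    [FiniteDimensional k A] (d' : ℕ) {I : Type v} [Infinite I]
    (X : I → FDMod k A) (hX : HomOrthFamily X)
    (hdim : ∀ i, finrank k (X i).carrier = d') :
    ∃ d : ℕ, 0 < d ∧ d ≤ d' ∧
      ∃ (J : Type u) (B : J → FDMod k A), Infinite J ∧
        HomOrthFamily B ∧ (∀ j, (B j).IsBrick) ∧
        (∀ j, finrank k (B j).carrier = d) :=
  stmt5_general d' X hX hdim
end

section
/- Let A be a finite-dimensional algebra over an algebraically closed field and let d be a positive integer. Then the following are equivalent: (1) there exist infinitely many pairwise non-isomorphic bricks of k-dimension d; (2) there exists an infinite Hom-orthogonal set consisting of bricks of k-dimension d. -/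
universe u v

open Module

variable {k A : Type u} [Field k] [Ring A] [Algebra k A]

/-!
Fix bases, so that a module of dimension `d` becomes a point of the affine space of tuples of
`d × d` matrices (the actions of a basis of `A`) and `A`-linear maps become intertwining matrices.
For a brick `ρ` the intertwiner equations have a one-dimensional solution space at `ρ`, and a
determinant/adjugate construction produces a polynomial `P` with `P ρ ≠ 0` such that, wherever
`P ≠ 0`, every nonzero homomorphism to or from `ρ` is an isomorphism. By Noetherianity, infinitely
many of the given bricks lie on a closed set `Z` such that a polynomial vanishing at infinitely
many of them vanishes on all of `Z`. Hence a brick on `Z` is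
Hom-orthogonal to all but finitely many others on `Z`, and a greedy choice yields an infinite
Hom-orthogonal sequence.
-/

open Matrix MvPolynomial

theorem LinearMap.exists_comp_eq_of_ker_le {K V V' W : Type*} [Field K] [AddCommGroup V]
    [Module K V] [AddCommGroup V'] [Module K V'] [AddCommGroup W] [Module K W]
    (f : V →ₗ[K] V') (g : V →ₗ[K] W) (hfg : LinearMap.ker f ≤ LinearMap.ker g) :
    ∃ h : V' →ₗ[K] W, h ∘ₗ f = g := by
  obtain ⟨h, hh⟩ := LinearMap.exists_extend
    ((LinearMap.ker f).liftQ g hfg ∘ₗ f.quotKerEquivRange.symm.toLinearMap)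
  refine ⟨h, LinearMap.ext fun v => ?_⟩
  simpa [LinearMap.quotKerEquivRange_symm_apply_image] using
    LinearMap.congr_fun hh ⟨f v, LinearMap.mem_range_self f v⟩

theorem Matrix.exists_mul_eq_of_ker_le {K ι κ κ' : Type*} [Field K] [Fintype ι] [Fintype κ]
    [DecidableEq ι] [DecidableEq κ] (B : Matrix ι κ K) (P : Matrix κ' κ K)
    (h : ∀ v, B *ᵥ v = 0 → P *ᵥ v = 0) : ∃ S : Matrix κ' ι K, S * B = P := by
  obtain ⟨S, hS⟩ := LinearMap.exists_comp_eq_of_ker_le B.mulVecLin P.mulVecLin h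
  refine ⟨LinearMap.toMatrix' S, ?_⟩
  rw [← LinearMap.toMatrix'_toLin' B, ← LinearMap.toMatrix'_comp, Matrix.toLin'_apply', hS]
  exact LinearMap.toMatrix'_toLin' P

theorem MvPolynomial.exists_ker_le_span_of_eval_ne_zero {σ K ι κ : Type*} [Field K] [Fintype ι]
    [Fintype κ] [DecidableEq ι] [DecidableEq κ] (L : Matrix ι κ (MvPolynomial σ K))
    (z : σ → K) (w : κ → K) (hw : w ≠ 0)
    (hker : ∀ v, L.map (eval z) *ᵥ v = 0 → ∃ t : K, v = t • w) :
    ∃ (P : MvPolynomial σ K) (u : κ → MvPolynomial σ K), eval z P ≠ 0 ∧ eval z ∘ u = w ∧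
      ∀ x v, eval x P ≠ 0 → L.map (eval x) *ᵥ v = 0 → ∃ t : K, v = t • (eval x ∘ u) := by
  obtain ⟨c, hc : w c ≠ 0⟩ := Function.ne_iff.1 hw
  set φ : κ → K := (w c)⁻¹ • Pi.single c 1
  have hφw : φ ⬝ᵥ w = 1 := by simp [φ, inv_mul_cancel₀ hc]
  have hK : ∀ v, vecMulVec w φ *ᵥ v = (φ ⬝ᵥ v) • w := fun v => by
    rw [vecMulVec_mulVec, op_smul_eq_smul]
  obtain ⟨S, hS⟩ := (L.map (eval z)).exists_mul_eq_of_ker_le (1 - vecMulVec w φ) fun v hv => by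
    obtain ⟨t, rfl⟩ := hker v hv
    simp [sub_mulVec, hK, dotProduct_smul, hφw]
  -- `M x = S * L x + w φᵀ` is the identity at `z` and sends `ker (L x)` into the line `K w`, so
  -- `adj (M x)` sends that kernel into the line through `u x = adj (M x) *ᵥ w`.
  -- (Without the ascription on `C` the product elaborates with `CStarMatrix`'s multiplication.)
  set M : Matrix κ κ (MvPolynomial σ K) :=
    S.map (C : K →+* MvPolynomial σ K) * L + (vecMulVec w φ).map C with hMdef
  have hM : ∀ x, M.map (eval x) = S * L.map (eval x) + vecMulVec w φ := fun x => by
    rw [hMdef, Matrix.map_add _ (_root_.map_add (eval x)), Matrix.map_mul, Matrix.map_map,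
      Matrix.map_map]
    simp [Function.comp_def]
  have hu : ∀ x, eval x ∘ (M.adjugate *ᵥ (C ∘ w)) = (M.map (eval x)).adjugate *ᵥ w := fun x => by
    ext i
    rw [Function.comp_apply, RingHom.map_mulVec, ← RingHom.mapMatrix_apply, RingHom.map_adjugate]
    simp [Function.comp_def]
  have hMz : M.map (eval z) = 1 := by rw [hM, hS, sub_add_cancel]
  refine ⟨M.det, M.adjugate *ᵥ (C ∘ w), ?_, ?_, fun x v hx hv => ?_⟩
  · simp [RingHom.map_det, RingHom.mapMatrix_apply, hMz]
  · rw [hu, hMz, adjugate_one, one_mulVec]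
  · have hMv : M.map (eval x) *ᵥ v = (φ ⬝ᵥ v) • w := by
      rw [hM, add_mulVec, ← mulVec_mulVec, hv, mulVec_zero, zero_add, hK]
    have key : (M.map (eval x)).det • v = (φ ⬝ᵥ v) • (eval x ∘ (M.adjugate *ᵥ (C ∘ w))) := by
      rw [hu, ← mulVec_smul, ← hMv, mulVec_mulVec, adjugate_mul, smul_mulVec, one_mulVec]
    refine ⟨(eval x M.det)⁻¹ * (φ ⬝ᵥ v), ?_⟩
    rw [mul_smul, ← key, smul_smul, RingHom.map_det, RingHom.mapMatrix_apply,
      inv_mul_cancel₀ (by rwa [RingHom.map_det] at hx), one_smul]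

theorem MvPolynomial.exists_infinite_generic {σ K I : Type*} [Field K] [Finite σ] [Infinite I]
    (p : I → σ → K) :
    ∃ J : Set I, J.Infinite ∧ ∀ (P : MvPolynomial σ K), ∀ j ∈ J, eval (p j) P ≠ 0 →
      {i ∈ J | eval (p i) P = 0}.Finite := by
  -- `J` is cut out by an ideal `𝔞` maximal among those vanishing at infinitely many `p i`.
  set V : Ideal (MvPolynomial σ K) → Set I := fun 𝔞 => {i | 𝔞 ≤ RingHom.ker (eval (p i))}
  obtain ⟨𝔞, h𝔞, hmax⟩ := set_has_maximal_iff_noetherian.2 inferInstance {𝔞 | (V 𝔞).Infinite}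
    ⟨⊥, by simpa [V] using Set.infinite_univ⟩
  refine ⟨V 𝔞, h𝔞, fun P j hj hPj => ?_⟩
  by_contra hinf
  have hsup : (V (𝔞 ⊔ Ideal.span {P})).Infinite := by
    refine Set.Infinite.mono (fun i hi => ?_) hinf
    exact sup_le hi.1 ((Ideal.span_singleton_le_iff_mem (RingHom.ker (eval (p i)))).2 hi.2)
  have hP : P ∈ 𝔞 := by
    have := (le_sup_left : 𝔞 ≤ 𝔞 ⊔ Ideal.span {P}).eq_of_not_lt (hmax _ hsup)
    exact this ▸ Ideal.mem_sup_right (Ideal.mem_span_singleton_self P)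
  exact hPj (hj hP)

theorem Set.Infinite.exists_seq_pairwise {I : Type*} {J : Set I} (hJ : J.Infinite)
    (R : I → I → Prop) [Std.Symm R] (hR : ∀ j ∈ J, {i ∈ J | ¬R j i}.Finite) :
    ∃ g : ℕ → I, Function.Injective g ∧ Pairwise fun m n => R (g m) (g n) := by
  have : Std.Symm fun x y : I => x ≠ y ∧ R x y := ⟨fun x y h => ⟨h.1.symm, symm h.2⟩⟩
  obtain ⟨g, -, hg⟩ := exists_seq_of_forall_finset_exists' (· ∈ J) (fun x y => x ≠ y ∧ R x y)
    fun s hs => by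
      have hbad : (↑s ∪ ⋃ j ∈ s, {i ∈ J | ¬R j i}).Finite :=
        s.finite_toSet.union (s.finite_toSet.biUnion fun j hj => hR j (hs j hj))
      obtain ⟨y, hyJ, hy⟩ := (hJ.sdiff hbad).nonempty
      simp only [Set.mem_union, Finset.mem_coe, Set.mem_iUnion, Set.mem_ofPred_eq, not_or,
        not_exists, not_and, not_not] at hy
      exact ⟨y, hyJ, fun x hx => ⟨fun h => hy.1 (h ▸ hx), hy.2 x hx hyJ⟩⟩
  exact ⟨g, fun m n h => by_contra fun hmn => (hg hmn).1 h, fun m n hmn => (hg hmn).2⟩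

section Intertwiners

variable {R : Type*} [CommRing R] {ι m : Type*} [DecidableEq m]

def Intertwines [Fintype m] (a b : ι → Matrix m m R) (F : Matrix m m R) : Prop :=
  ∀ i, F * a i = b i * F

def intertwinerSystem (a b : ι → Matrix m m R) : Matrix (ι × m × m) (m × m) R :=
  Matrix.of fun r c =>
    (if c.1 = r.2.1 then a r.1 c.2 r.2.2 else 0) - (if c.2 = r.2.2 then b r.1 r.2.1 c.1 else 0)

theorem intertwinerSystem_mulVec [Fintype m] (a b : ι → Matrix m m R) (F : Matrix m m R) :
    intertwinerSystem a b *ᵥ Function.uncurry F =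
      fun r => (F * a r.1 - b r.1 * F) r.2.1 r.2.2 := by
  ext ⟨i, p, q⟩
  simp only [mulVec, dotProduct, intertwinerSystem, of_apply, Matrix.sub_apply, sub_mul,
    ite_mul, zero_mul, Finset.sum_sub_distrib, Fintype.sum_prod_type]
  congr 1
  · rw [Finset.sum_comm]
    simp [mul_apply, mul_comm]
    rfl
  · simp [mul_apply]
    rfl

theorem intertwinerSystem_mulVec_eq_zero_iff [Fintype m] (a b : ι → Matrix m m R)
    (F : Matrix m m R) : intertwinerSystem a b *ᵥ Function.uncurry F = 0 ↔ Intertwines a b F := by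
  rw [intertwinerSystem_mulVec, Intertwines]
  constructor
  · intro h i
    ext p q
    simpa [sub_eq_zero] using congrFun h (i, p, q)
  · intro h
    ext ⟨i, p, q⟩
    simp [h i]

theorem intertwinerSystem_map {S : Type*} [CommRing S] (f : R →+* S) (a b : ι → Matrix m m R) :
    (intertwinerSystem a b).map f =
      intertwinerSystem (fun i => (a i).map f) (fun i => (b i).map f) := by
  ext r c
  simp [intertwinerSystem, apply_ite f]

end Intertwiners

section GenericTuple

variable {K : Type*} [Field K] {ι m : Type*}

def coords (x : ι → Matrix m m K) : ι × m × m → K := fun v => x v.1 v.2.1 v.2.2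

noncomputable def genericTuple : ι → Matrix m m (MvPolynomial (ι × m × m) K) :=
  fun i => Matrix.of fun p q => X (i, p, q)

theorem genericTuple_map_eval (x : ι → Matrix m m K) (i : ι) :
    (genericTuple i).map (eval (coords x)) = x i := by
  ext p q
  simp [genericTuple, coords]

theorem map_C_map_eval {σ : Type*} (A : Matrix m m K) (y : σ → K) :
    (A.map C).map (eval y) = A := by
  ext p q
  simp

end GenericTuple

theorem exists_isUnit_of_intertwines_of_eval_ne_zero {σ K ι m : Type*} [Field K] [Fintype ι]
    [DecidableEq ι] [Fintype m] [DecidableEq m] [Nonempty m]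
    (a b : ι → Matrix m m (MvPolynomial σ K)) (z : σ → K)
    (hz : ∀ F, Intertwines (fun i => (a i).map (eval z)) (fun i => (b i).map (eval z)) F →
      ∃ c : K, F = c • 1) :
    ∃ P : MvPolynomial σ K, eval z P ≠ 0 ∧ ∀ x F,
      eval x P ≠ 0 → Intertwines (fun i => (a i).map (eval x)) (fun i => (b i).map (eval x)) F →
        F ≠ 0 → IsUnit F := by
  have hw : Function.uncurry (1 : Matrix m m K) ≠ 0 := by
    obtain ⟨p⟩ := ‹Nonempty m›
    exact Function.ne_iff.2 ⟨(p, p), by simp [Function.uncurry]⟩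
  obtain ⟨P, u, hPz, huz, hu⟩ :=
    exists_ker_le_span_of_eval_ne_zero (intertwinerSystem a b) z _ hw fun v hv => by
      rw [intertwinerSystem_map] at hv
      obtain ⟨c, hc⟩ := hz (Matrix.of fun p q => v (p, q))
        ((intertwinerSystem_mulVec_eq_zero_iff _ _ _).1 hv)
      exact ⟨c, funext fun r => congrFun (congrFun hc r.1) r.2⟩
  -- Where `P * det U ≠ 0`, a nonzero intertwiner is a nonzero multiple of the invertible `U x`.
  set U : Matrix m m (MvPolynomial σ K) := Matrix.of fun p q => u (p, q)
  have hUx : ∀ x, (eval x) U.det = (U.map (eval x)).det := fun x => RingHom.map_det _ U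
  have hUz : U.map (eval z) = 1 := by
    ext p q
    exact congrFun huz (p, q)
  refine ⟨P * U.det, by simp [hUx, hUz, hPz], fun x F hx hF hF0 => ?_⟩
  rw [map_mul, mul_ne_zero_iff, hUx] at hx
  rw [← intertwinerSystem_mulVec_eq_zero_iff, ← intertwinerSystem_map] at hF
  obtain ⟨t, ht⟩ := hu x _ hx.1 hF
  have hFU : F = t • U.map (eval x) := by
    ext p q
    exact congrFun ht (p, q)
  have ht0 : t ≠ 0 := by
    rintro rfl
    exact hF0 (by simpa using hFU)
  rw [isUnit_iff_isUnit_det, hFU, det_smul, isUnit_iff_ne_zero]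
  exact mul_ne_zero (pow_ne_zero _ ht0) hx.2

namespace FDMod

variable {d : ℕ} {M N : FDMod k A}

theorem toMatrix_restrictScalars_ne_zero (bM : Basis (Fin d) k M.carrier)
    (bN : Basis (Fin d) k N.carrier) {f : M.carrier →ₗ[A] N.carrier} (hf : f ≠ 0) :
    LinearMap.toMatrix bM bN (f.restrictScalars k) ≠ 0 :=
  (LinearMap.toMatrix bM bN).map_ne_zero_iff.2 fun h => hf (LinearMap.ext (LinearMap.congr_fun h ·))

variable [FiniteDimensional k A]

/-- `M` as a point of the representation variety: the matrices, in the basis `b`, of the actions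
of the elements of `Module.finBasis k A`. -/
noncomputable def actionTuple (M : FDMod k A) (b : Basis (Fin d) k M.carrier) :
    Fin (finrank k A) → Matrix (Fin d) (Fin d) k :=
  fun i => LinearMap.toMatrix b b (DistribSMul.toLinearMap k M.carrier (Module.finBasis k A i))

theorem intertwines_toMatrix (bM : Basis (Fin d) k M.carrier) (bN : Basis (Fin d) k N.carrier)
    (f : M.carrier →ₗ[A] N.carrier) :
    Intertwines (M.actionTuple bM) (N.actionTuple bN)
      (LinearMap.toMatrix bM bN (f.restrictScalars k)) := by
  intro i
  rw [actionTuple, actionTuple, ← LinearMap.toMatrix_comp, ← LinearMap.toMatrix_comp]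
  congr 1
  ext m
  exact f.map_smul _ m

theorem map_smul_of_map_basis_smul (f : M.carrier →ₗ[k] N.carrier)
    (hf : ∀ i m, f (Module.finBasis k A i • m) = Module.finBasis k A i • f m)
    (a : A) (m : M.carrier) : f (a • m) = a • f m := by
  rw [← (Module.finBasis k A).sum_repr a, Finset.sum_smul, Finset.sum_smul, map_sum]
  refine Finset.sum_congr rfl fun i _ => ?_
  rw [smul_assoc, smul_assoc, f.map_smul, hf i]

theorem exists_linearMap_of_intertwines (bM : Basis (Fin d) k M.carrier)
    (bN : Basis (Fin d) k N.carrier) {F : Matrix (Fin d) (Fin d) k}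
    (hF : Intertwines (M.actionTuple bM) (N.actionTuple bN) F) :
    ∃ f : M.carrier →ₗ[A] N.carrier, LinearMap.toMatrix bM bN (f.restrictScalars k) = F := by
  set g := Matrix.toLin bM bN F
  have hcomm : ∀ i m, g (Module.finBasis k A i • m) = Module.finBasis k A i • g m := by
    intro i
    have := congrArg (Matrix.toLin bM bN) (hF i)
    rw [actionTuple, actionTuple, ← LinearMap.toMatrix_toLin bM bN F,
      ← LinearMap.toMatrix_comp, ← LinearMap.toMatrix_comp, Matrix.toLin_toMatrix,
      Matrix.toLin_toMatrix] at this
    exact LinearMap.congr_fun this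
  exact ⟨{ g with map_smul' := map_smul_of_map_basis_smul g hcomm }, LinearMap.toMatrix_toLin _ _ F⟩

theorem iso_of_intertwines_of_isUnit (bM : Basis (Fin d) k M.carrier)
    (bN : Basis (Fin d) k N.carrier) {F : Matrix (Fin d) (Fin d) k}
    (hF : Intertwines (M.actionTuple bM) (N.actionTuple bN) F) (hFu : IsUnit F) : M.Iso N := by
  obtain ⟨f, rfl⟩ := exists_linearMap_of_intertwines bM bN hF
  have hinj : Function.Injective f := by
    refine (injective_iff_map_eq_zero f).2 fun m hm =>
      bM.equivFun.injective (Matrix.mulVec_injective_iff_isUnit.2 hFu ?_)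
    simp [LinearMap.toMatrix_mulVec_repr, hm]
  have hsurj : Function.Surjective (f.restrictScalars k) :=
    (LinearMap.injective_iff_surjective_of_finrank_eq_finrank
      (by rw [finrank_eq_card_basis bM, finrank_eq_card_basis bN])).1 hinj
  exact ⟨LinearEquiv.ofBijective f ⟨hinj, hsurj⟩⟩

theorem IsBrick.eq_smul_one_of_intertwines (hM : M.IsBrick) (b : Basis (Fin d) k M.carrier)
    {F : Matrix (Fin d) (Fin d) k} (hF : Intertwines (M.actionTuple b) (M.actionTuple b) F) :
    ∃ c : k, F = c • 1 := by
  obtain ⟨f, rfl⟩ := exists_linearMap_of_intertwines b b hF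
  obtain ⟨c, hc⟩ := hM.2 f
  refine ⟨c, ?_⟩
  rw [← LinearMap.toMatrix_id b, ← map_smul]
  congr 1
  ext m
  exact hc m

theorem IsBrick.exists_poly_iso_of_not_homOrth (hM : M.IsBrick) (bM : Basis (Fin d) k M.carrier) :
    ∃ P : MvPolynomial (Fin (finrank k A) × Fin d × Fin d) k,
      eval (coords (M.actionTuple bM)) P ≠ 0 ∧ ∀ (N : FDMod k A) (bN : Basis (Fin d) k N.carrier),
        eval (coords (N.actionTuple bN)) P ≠ 0 → ¬M.HomOrth N → M.Iso N := by
  have := hM.1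
  have := bM.index_nonempty
  set ρ := M.actionTuple bM
  have hρ : ∀ F, Intertwines ρ ρ F → ∃ c : k, F = c • 1 := fun F => hM.eq_smul_one_of_intertwines bM
  obtain ⟨P₁, hP₁, hfrom⟩ := exists_isUnit_of_intertwines_of_eval_ne_zero
    (fun i => (ρ i).map C) genericTuple (coords ρ)
    (by simpa only [map_C_map_eval, genericTuple_map_eval] using hρ)
  obtain ⟨P₂, hP₂, hto⟩ := exists_isUnit_of_intertwines_of_eval_ne_zero
    genericTuple (fun i => (ρ i).map C) (coords ρ)
    (by simpa only [map_C_map_eval, genericTuple_map_eval] using hρ)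
  refine ⟨P₁ * P₂, by simp [hP₁, hP₂], fun N bN hP hMN => ?_⟩
  rw [map_mul, mul_ne_zero_iff] at hP
  have hfromN := hfrom (coords (N.actionTuple bN))
  have htoN := hto (coords (N.actionTuple bN))
  simp only [map_C_map_eval, genericTuple_map_eval] at hfromN htoN
  rcases not_and_or.1 hMN with hMN | hNM
  · obtain ⟨f, hf⟩ := not_forall.1 hMN
    exact iso_of_intertwines_of_isUnit bM bN (intertwines_toMatrix bM bN f)
      (hfromN _ hP.1 (intertwines_toMatrix bM bN f) (toMatrix_restrictScalars_ne_zero bM bN hf))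
  · obtain ⟨f, hf⟩ := not_forall.1 hNM
    obtain ⟨e⟩ := iso_of_intertwines_of_isUnit bN bM (intertwines_toMatrix bN bM f)
      (htoN _ hP.2 (intertwines_toMatrix bN bM f) (toMatrix_restrictScalars_ne_zero bN bM hf))
    exact ⟨e.symm⟩

end FDMod

theorem exists_injective_seq_homOrth [FiniteDimensional k A] {I : Type*} [Infinite I]
    (X : I → FDMod k A) {d : ℕ} (hbr : ∀ i, (X i).IsBrick) (hni : ∀ i j, i ≠ j → ¬(X i).Iso (X j))
    (hdim : ∀ i, finrank k (X i).carrier = d) :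
    ∃ g : ℕ → I, Function.Injective g ∧ Pairwise fun m n => (X (g m)).HomOrth (X (g n)) := by
  let b i : Basis (Fin d) k (X i).carrier := Module.finBasisOfFinrankEq k _ (hdim i)
  choose P hPi hP using fun i => (hbr i).exists_poly_iso_of_not_homOrth (b i)
  obtain ⟨J, hJ, hgen⟩ := exists_infinite_generic fun i => coords ((X i).actionTuple (b i))
  have : Std.Symm fun i j => (X i).HomOrth (X j) := ⟨fun _ _ h => ⟨h.2, h.1⟩⟩
  refine hJ.exists_seq_pairwise (fun i j => (X i).HomOrth (X j)) fun j hj =>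
    ((hgen (P j) j hj (hPi j)).insert j).subset ?_
  rintro i ⟨hiJ, hji⟩
  by_contra hne
  simp only [Set.mem_insert_iff, Set.mem_ofPred_eq, not_or] at hne
  exact hni j i (Ne.symm hne.1) (hP j (X i) (b i) (fun h => hne.2 ⟨hiJ, h⟩) hji)

theorem stmt7_general {k A : Type u} [Field k] [Ring A] [Algebra k A]
    [FiniteDimensional k A] (d : ℕ) :
    (∃ (I : Type u) (X : I → FDMod k A), Infinite I ∧
        (∀ i, (X i).IsBrick) ∧ (∀ i j, i ≠ j → ¬(X i).Iso (X j)) ∧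
        (∀ i, finrank k (X i).carrier = d)) ↔
    (∃ (I : Type u) (X : I → FDMod k A), Infinite I ∧
        HomOrthFamily X ∧ (∀ i, (X i).IsBrick) ∧
        (∀ i, finrank k (X i).carrier = d)) := by
  constructor
  · rintro ⟨I, X, hI, hbr, hni, hdim⟩
    obtain ⟨g, hg, hgX⟩ := exists_injective_seq_homOrth X hbr hni hdim
    have hne {m n : ULift ℕ} (h : m ≠ n) : g m.down ≠ g n.down := hg.ne (ULift.down_injective.ne h)
    exact ⟨ULift ℕ, fun n => X (g n.down), inferInstance,
      ⟨fun _ => (hbr _).1, fun _ _ h => hni _ _ (hne h),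
        fun _ _ h => hgX (ULift.down_injective.ne h)⟩,
      fun _ => hbr _, fun _ => hdim _⟩
  · rintro ⟨I, X, hI, hX, hbr, hdim⟩
    exact ⟨I, X, hI, hbr, hX.2.1, hdim⟩

/-- For a positive integer `d`, the following are equivalent:
(1) there exist infinitely many pairwise non-isomorphic bricks of `k`-dimension `d`;
(2) there exists an infinite Hom-orthogonal set consisting of bricks of
`k`-dimension `d`. -/
theorem stmt7 {k A : Type u} [Field k] [IsAlgClosed k] [Ring A] [Algebra k A]
    [FiniteDimensional k A] (d : ℕ) (hd : 0 < d) :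
    (∃ (I : Type u) (X : I → FDMod k A), Infinite I ∧
        (∀ i, (X i).IsBrick) ∧ (∀ i j, i ≠ j → ¬(X i).Iso (X j)) ∧
        (∀ i, finrank k (X i).carrier = d)) ↔
    (∃ (I : Type u) (X : I → FDMod k A), Infinite I ∧
        HomOrthFamily X ∧ (∀ i, (X i).IsBrick) ∧
        (∀ i, finrank k (X i).carrier = d)) :=
  stmt7_general d
end

section
/- Let A be a finite-dimensional algebra over an algebraically closed field and let X, M, Z be finite-dimensional left A-modules with M ≠ 0. If there exists a short exact sequence 0 → X → M ⊕ Z → Z → 0 in mod A, then Hom_A(X, M) ≠ 0. -/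
universe u v

open Module

variable {k A : Type u} [Field k] [Ring A] [Algebra k A]

/-!
Apply the left exact functor `Hom_A(-, M)` to the sequence: this gives
`dim Hom(M ⊕ Z, M) ≤ dim Hom(Z, M) + dim Hom(X, M)`, and since
`Hom(M ⊕ Z, M) ≅ End(M) × Hom(Z, M)`, it follows that `dim Hom(X, M) ≥ dim End(M) > 0`.
-/

namespace LinearMap

variable {R S : Type*} [Ring R] [Semiring S] {X Y Z : Type*} (N : Type*)
  [AddCommGroup X] [AddCommGroup Y] [AddCommGroup Z] [AddCommGroup N]
  [Module R X] [Module R Y] [Module R Z] [Module R N] [Module S N] [SMulCommClass R S N]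

-- `LinearMap.exact_lcomp_of_exact_of_surjective` needs a commutative base ring.
theorem exact_lcomp_of_exact_of_surjective' {f : X →ₗ[R] Y} {g : Y →ₗ[R] Z}
    (hfg : Function.Exact f g) (hg : Function.Surjective g) :
    Function.Exact (lcomp S N g) (lcomp S N f) := by
  intro h
  simp only [lcomp_apply', Set.mem_range]
  refine ⟨fun hh ↦ ?_, fun ⟨y, hy⟩ ↦ ?_⟩
  · use ((range f).liftQ h (range_le_ker_iff.mpr hh)).comp
      (hfg.linearEquivOfSurjective hg).symm.toLinearMap
    ext x
    simp
  · rw [← hy, comp_assoc, hfg.linearMap_comp_eq_zero, comp_zero]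

end LinearMap

theorem Function.Exact.finrank_le_add {K U V W : Type*} [DivisionRing K]
    [AddCommGroup U] [AddCommGroup V] [AddCommGroup W] [Module K U] [Module K V] [Module K W]
    [FiniteDimensional K U] [FiniteDimensional K V] [FiniteDimensional K W]
    {φ : U →ₗ[K] V} {ψ : V →ₗ[K] W} (h : Function.Exact φ ψ) :
    finrank K V ≤ finrank K U + finrank K W := by
  have hrank := ψ.finrank_range_add_finrank_ker
  rw [h.linearMap_ker_eq] at hrank
  have := φ.finrank_range_le
  have := ψ.range.finrank_le
  omega

section HomDimension

variable {k A : Type*} [Field k] [Ring A] [Algebra k A]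
  {X Y Z N : Type*} [AddCommGroup X] [AddCommGroup Y] [AddCommGroup Z] [AddCommGroup N]
  [Module k X] [Module A X] [IsScalarTower k A X] [FiniteDimensional k X]
  [Module k Y] [Module A Y] [IsScalarTower k A Y] [FiniteDimensional k Y]
  [Module k Z] [Module A Z] [IsScalarTower k A Z] [FiniteDimensional k Z]
  [Module k N] [Module A N] [IsScalarTower k A N] [FiniteDimensional k N]

instance FiniteDimensional.linearMap_of_isScalarTower : FiniteDimensional k (X →ₗ[A] N) :=
  .of_injective (LinearMap.restrictScalarsₗ k A X N k) (LinearMap.restrictScalars_injective k)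

theorem finrank_linearMap_le_of_exact {f : X →ₗ[A] Y} {g : Y →ₗ[A] Z}
    (hfg : Function.Exact f g) (hg : Function.Surjective g) :
    finrank k (Y →ₗ[A] N) ≤ finrank k (Z →ₗ[A] N) + finrank k (X →ₗ[A] N) :=
  (LinearMap.exact_lcomp_of_exact_of_surjective' (S := k) N hfg hg).finrank_le_add

theorem finrank_linearMap_prod :
    finrank k (X × Z →ₗ[A] N) = finrank k (X →ₗ[A] N) + finrank k (Z →ₗ[A] N) := by
  rw [← (LinearMap.coprodEquiv k).finrank_eq, finrank_prod]

theorem finrank_linearMap_le_of_exact_prod {ι : X →ₗ[A] N × Z} {π : N × Z →ₗ[A] Z}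
    (hexact : Function.Exact ι π) (hπ : Function.Surjective π) :
    finrank k (N →ₗ[A] N) ≤ finrank k (X →ₗ[A] N) := by
  have hle := finrank_linearMap_le_of_exact (k := k) (N := N) hexact hπ
  rw [finrank_linearMap_prod] at hle
  omega

end HomDimension

theorem stmt11_general {k A : Type u} [Field k] [Ring A] [Algebra k A]
    (X M Z : FDMod k A) (hM : Nontrivial M.carrier)
    (ι : X.carrier →ₗ[A] M.carrier × Z.carrier)
    (π : M.carrier × Z.carrier →ₗ[A] Z.carrier)
    (hπ : Function.Surjective π)
    (hexact : LinearMap.range ι = LinearMap.ker π) :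
    ∃ f : X.carrier →ₗ[A] M.carrier, f ≠ 0 := by
  have hdim := finrank_linearMap_le_of_exact_prod (k := k) (LinearMap.exact_iff.mpr hexact.symm) hπ
  have hEnd : 0 < finrank k (M.carrier →ₗ[A] M.carrier) := Module.finrank_pos
  exact (finrank_pos_iff_exists_ne_zero (R := k)).mp (hEnd.trans_le hdim)

/-- If `X`, `M`, `Z` are finite-dimensional `A`-modules with
`M ≠ 0` and there is a short exact sequence `0 → X → M ⊕ Z → Z → 0` in `mod A`,
then `Hom_A(X, M) ≠ 0`. -/
theorem stmt11 {k A : Type u} [Field k] [IsAlgClosed k] [Ring A] [Algebra k A]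
    [FiniteDimensional k A] (X M Z : FDMod k A) (hM : Nontrivial M.carrier)
    (ι : X.carrier →ₗ[A] M.carrier × Z.carrier)
    (π : M.carrier × Z.carrier →ₗ[A] Z.carrier)
    (hι : Function.Injective ι) (hπ : Function.Surjective π)
    (hexact : LinearMap.range ι = LinearMap.ker π) :
    ∃ f : X.carrier →ₗ[A] M.carrier, f ≠ 0 :=
  stmt11_general X M Z hM ι π hπ hexact
end
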